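/- For every n ≥ 1 and every subset S of vertices of Q^n with |S| = 2^{n-1}+1, the largest eigenvalue of the adjacency matrix of the subgraph of Q^n induced on S is at least √n. -/

import Mathlib

/-!
Huang's proof of the sensitivity conjecture. The signed matrices `Bₙ` defined by
`B₀ = 0`, `B_{n+1} = [[Bₙ, 1], [1, -Bₙ]]` satisfy `Bₙ² = n` and `tr Bₙ = 0`, so the
`√n`-eigenspace of `Bₙ` has dimension `2^(n-1)`; moreover `|Bₙ|` is the adjacency matrix of
`Qⁿ`. A subspace of dimension `2^(n-1)` meets the `(2^(n-1)+1)`-dimensional space of functions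
supported on `S` nontrivially, giving an eigenvector `v` supported on `S`. Then
`√n ‖v‖² = ⟨v, Bₙ v⟩ ≤ ⟨|v|, A_S |v|⟩` for the adjacency matrix `A_S` of the induced subgraph,
and the Rayleigh quotient of the symmetric matrix `A_S` is at most its largest eigenvalue.
-/

open scoped Classical

/-- The `n`-dimensional hypercube graph on `{0,1}^n`: two vertices are adjacent
iff they differ in exactly one coordinate. -/
def hypercube (n : ℕ) : SimpleGraph (Fin n → Fin 2) where
  Adj x y := (Finset.univ.filter fun i => x i ≠ y i).card = 1
  symm := by
    constructor
    intro x y h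
    simpa [ne_comm] using h
  loopless := by
    constructor
    intro x h
    simp at h

open Matrix Module

theorem hypercube_adj_iff {n : ℕ} {x y : Fin n → Fin 2} :
    (hypercube n).Adj x y ↔ hammingDist x y = 1 := Iff.rfl

theorem hammingDist_cons {n : ℕ} {β : Type*} [DecidableEq β] (a b : β) (x y : Fin n → β) :
    hammingDist (Fin.cons a x : Fin (n + 1) → β) (Fin.cons b y) =
      (if a = b then 0 else 1) + hammingDist x y := by
  simp only [hammingDist, Finset.card_filter, Fin.sum_univ_succ, Fin.cons_zero, Fin.cons_succ]
  by_cases h : a = b <;> simp [h]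

theorem hypercube_adj_cons_cons {n : ℕ} (i j : Fin 2) (x y : Fin n → Fin 2) :
    (hypercube (n + 1)).Adj (Fin.cons i x) (Fin.cons j y) ↔
      i = j ∧ (hypercube n).Adj x y ∨ i ≠ j ∧ x = y := by
  rw [hypercube_adj_iff, hypercube_adj_iff, hammingDist_cons]
  by_cases h : i = j <;> simp [h]

def hypercubeSuccEquiv (n : ℕ) : (Fin (n + 1) → Fin 2) ≃ (Fin n → Fin 2) ⊕ (Fin n → Fin 2) :=
  (Fin.consEquiv fun _ => Fin 2).symm.trans
    ((finTwoEquiv.prodCongr (Equiv.refl _)).trans (Equiv.boolProdEquivSum _))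

@[simp] theorem hypercubeSuccEquiv_symm_inl {n : ℕ} (x : Fin n → Fin 2) :
    (hypercubeSuccEquiv n).symm (Sum.inl x) = Fin.cons 0 x := by
  simp [hypercubeSuccEquiv, Fin.consEquiv, finTwoEquiv]

@[simp] theorem hypercubeSuccEquiv_symm_inr {n : ℕ} (x : Fin n → Fin 2) :
    (hypercubeSuccEquiv n).symm (Sum.inr x) = Fin.cons 1 x := by
  simp [hypercubeSuccEquiv, Fin.consEquiv, finTwoEquiv]

section HuangMatrix

variable (R : Type*)

noncomputable def huangMatrix [Ring R] : (n : ℕ) → Matrix (Fin n → Fin 2) (Fin n → Fin 2) R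
  | 0 => 0
  | n + 1 => reindex (hypercubeSuccEquiv n).symm (hypercubeSuccEquiv n).symm
      (fromBlocks (huangMatrix n) 1 1 (-huangMatrix n))

variable {R}

theorem huangMatrix_succ_apply [Ring R] (n : ℕ) (a b : (Fin n → Fin 2) ⊕ (Fin n → Fin 2)) :
    huangMatrix R (n + 1) ((hypercubeSuccEquiv n).symm a) ((hypercubeSuccEquiv n).symm b) =
      fromBlocks (huangMatrix R n) 1 1 (-huangMatrix R n) a b := by
  simp [huangMatrix]

theorem huangMatrix_mul_self [Ring R] (n : ℕ) :
    huangMatrix R n * huangMatrix R n = (n : R) • 1 := by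
  induction n with
  | zero => simp [huangMatrix]
  | succ n ih =>
    have hblocks : fromBlocks (huangMatrix R n) 1 1 (-huangMatrix R n) *
        fromBlocks (huangMatrix R n) 1 1 (-huangMatrix R n) = ((n + 1 : ℕ) : R) • 1 := by
      rw [fromBlocks_multiply, ← fromBlocks_one, fromBlocks_smul, smul_zero]
      simp [ih, add_smul, add_comm]
    rw [huangMatrix, reindex_apply, submatrix_mul_equiv, hblocks]
    ext a b
    simp [one_apply]

theorem huangMatrix_apply_self [Ring R] (n : ℕ) (x : Fin n → Fin 2) : huangMatrix R n x x = 0 := by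
  induction n with
  | zero => rfl
  | succ n ih =>
    obtain ⟨a, rfl⟩ := (hypercubeSuccEquiv n).symm.surjective x
    rw [huangMatrix_succ_apply]
    cases a <;> simp [ih]

theorem trace_huangMatrix [Ring R] (n : ℕ) : (huangMatrix R n).trace = 0 :=
  Finset.sum_eq_zero fun x _ => huangMatrix_apply_self n x

theorem abs_huangMatrix_apply [Ring R] [LinearOrder R] [IsStrictOrderedRing R] (n : ℕ)
    (x y : Fin n → Fin 2) : |huangMatrix R n x y| = (hypercube n).adjMatrix R x y := by
  induction n with
  | zero => simp [huangMatrix, Subsingleton.elim x y]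
  | succ n ih =>
    obtain ⟨a, rfl⟩ := (hypercubeSuccEquiv n).symm.surjective x
    obtain ⟨b, rfl⟩ := (hypercubeSuccEquiv n).symm.surjective y
    rw [huangMatrix_succ_apply]
    cases a <;> cases b <;> simp [hypercube_adj_cons_cons, ih, one_apply, eq_comm, apply_ite]

end HuangMatrix

theorem Matrix.card_le_two_mul_finrank_eigenspace {K ι : Type*} [Field K] [CharZero K]
    [Fintype ι] [DecidableEq ι] {B : Matrix ι ι K} {s : K} (hs : s ≠ 0)
    (hB : B * B = s ^ 2 • 1) (htr : B.trace = 0) :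
    Fintype.card ι ≤ 2 * finrank K (Module.End.eigenspace (toLin' B) s) := by
  -- `P` projects onto the `s`-eigenspace along the `(-s)`-eigenspace; its trace is its rank.
  set P : Matrix ι ι K := (2 * s)⁻¹ • (B + s • 1)
  have hBP : B * P = s • P := by
    simp only [P, Matrix.mul_smul, mul_add, hB, Matrix.mul_one]
    module
  have hPP : P * P = P := by
    calc P * P = (2 * s)⁻¹ • (B * P + s • P) := by simp only [P, Matrix.smul_mul, add_mul, one_mul]
      _ = P := by
        rw [hBP, ← two_smul K, smul_smul 2 s, smul_smul, inv_mul_cancel₀ (by simpa), one_smul]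
  have hidem : IsIdempotentElem (toLin' P) := by
    rw [IsIdempotentElem, Module.End.mul_eq_comp, ← toLin'_mul, hPP]
  have hrange : LinearMap.range (toLin' P) ≤ Module.End.eigenspace (toLin' B) s := by
    rintro _ ⟨v, rfl⟩
    rw [Module.End.mem_eigenspace_iff, toLin'_apply, toLin'_apply, mulVec_mulVec, hBP, smul_mulVec]
  have htrace : ((2 * finrank K (LinearMap.range (toLin' P)) : ℕ) : K) = Fintype.card ι := by
    rw [Nat.cast_mul, ← (LinearMap.IsIdempotentElem.isProj_range _ hidem).trace, trace_toLin'_eq]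
    simp [P, trace_add, htr]
    field_simp
  rw [← Nat.cast_injective htrace]
  exact Nat.mul_le_mul_left 2 (Submodule.finrank_mono hrange)

theorem Submodule.exists_mem_ne_zero_support_subset {K ι : Type*} [Field K] [Fintype ι]
    [DecidableEq ι] (W : Submodule K (ι → K)) (S : Finset ι)
    (h : Fintype.card ι < finrank K W + S.card) :
    ∃ v ∈ W, v ≠ 0 ∧ Function.support v ⊆ S := by
  set f := LinearMap.funLeft K K (Subtype.val : {i // i ∉ S} → ι) ∘ₗ W.subtype
  have : finrank K ({i // i ∉ S} → K) < finrank K W := by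
    rw [finrank_fintype_fun_eq_card, Fintype.card_subtype_compl, Fintype.card_coe]
    have := S.card_le_univ
    omega
  obtain ⟨⟨v, hvW⟩, hv, hv0⟩ :=
    (Submodule.ne_bot_iff _).mp (LinearMap.ker_ne_bot_of_finrank_lt (f := f) this)
  refine ⟨v, hvW, by simpa using hv0, fun i hi => by_contra fun hiS => hi ?_⟩
  exact congrFun (LinearMap.mem_ker.mp hv) ⟨i, hiS⟩

theorem Matrix.IsHermitian.exists_mem_spectrum_dotProduct_mulVec_le {m : Type*} [Fintype m]
    [DecidableEq m] {A : Matrix m m ℝ} (hA : A.IsHermitian) {w : m → ℝ} (hw : w ≠ 0) :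
    ∃ μ ∈ spectrum ℝ A, w ⬝ᵥ (A *ᵥ w) ≤ μ * (w ⬝ᵥ w) := by
  set T := toEuclideanLin A
  have hT : T.IsSymmetric := isSymmetric_toEuclideanLin_iff.mpr hA
  set x : EuclideanSpace ℝ m := WithLp.toLp 2 w
  have hx : x ≠ 0 := by simpa [x] using hw
  have : Nontrivial (EuclideanSpace ℝ m) := ⟨⟨x, 0, hx⟩⟩
  set R : EuclideanSpace ℝ m → ℝ := fun y => RCLike.re (inner ℝ (T y) y) / ‖y‖ ^ 2
  have hRx : R x = w ⬝ᵥ (A *ᵥ w) / (w ⬝ᵥ w) := by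
    have hnorm : ‖x‖ ^ 2 = w ⬝ᵥ w := by
      rw [← real_inner_self_eq_norm_sq, EuclideanSpace.inner_eq_star_dotProduct]
      simp [x]
    simp only [R, hnorm]
    simp [T, x, EuclideanSpace.inner_eq_star_dotProduct]
  have hR : BddAbove (Set.range fun y : {y : EuclideanSpace ℝ m // y ≠ 0} => R y) := by
    obtain ⟨C, hC⟩ := (LinearMap.toContinuousLinearMap T).bddAbove_rayleighQuotient
    exact ⟨C, by rintro _ ⟨y, rfl⟩; exact (le_abs_self _).trans (hC ⟨y, rfl⟩)⟩
  refine ⟨_, spectrum_toLpLin (𝕜 := ℝ) (A := A) 2 ▸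
    hT.hasEigenvalue_iSup_of_finiteDimensional.mem_spectrum, ?_⟩
  rw [← div_le_iff₀ (by simpa using dotProduct_self_star_pos_iff.mpr hw), ← hRx]
  exact le_ciSup hR ⟨x, hx⟩

section RestrictSupport

variable {R ι : Type*} [CommRing R] [Fintype ι] {S : Finset ι}

theorem dotProduct_eq_subtype_of_support_subset (u : ι → R) {v : ι → R}
    (hv : Function.support v ⊆ S) :
    u ⬝ᵥ v = (fun i : S => u i) ⬝ᵥ (fun i : S => v i) := by
  have hzero : ∀ i ∉ S, u i * v i = 0 := fun i hi => by
    rw [Function.notMem_support.mp fun h => hi (hv h), mul_zero]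
  simp only [dotProduct]
  rw [Finset.sum_coe_sort S fun i => u i * v i]
  exact (Finset.sum_subset (Finset.subset_univ S) fun i _ hi => hzero i hi).symm

theorem dotProduct_mulVec_eq_submatrix_of_support_subset (M : Matrix ι ι R) {v : ι → R}
    (hv : Function.support v ⊆ S) :
    v ⬝ᵥ (M *ᵥ v) = (fun i : S => v i) ⬝ᵥ (M.submatrix (↑) (↑) *ᵥ fun i : S => v i) := by
  rw [dotProduct_comm, dotProduct_eq_subtype_of_support_subset _ hv, dotProduct_comm]
  congr 1
  funext i
  exact dotProduct_eq_subtype_of_support_subset (M i) hv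

end RestrictSupport

theorem dotProduct_mulVec_le_abs {R ι : Type*} [CommRing R] [LinearOrder R] [IsStrictOrderedRing R]
    [Fintype ι] {B A : Matrix ι ι R} (h : ∀ i j, |B i j| ≤ A i j) (v : ι → R) :
    v ⬝ᵥ (B *ᵥ v) ≤ |v| ⬝ᵥ (A *ᵥ |v|) := by
  simp only [dotProduct, mulVec, Finset.mul_sum, Pi.abs_apply]
  refine Finset.sum_le_sum fun i _ => Finset.sum_le_sum fun j _ => ?_
  calc v i * (B i j * v j) ≤ |v i * (B i j * v j)| := le_abs_self _
    _ = |v i| * (|B i j| * |v j|) := by rw [abs_mul, abs_mul]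
    _ ≤ |v i| * (A i j * |v j|) := by gcongr; exact h i j

theorem Matrix.IsHermitian.exists_mem_spectrum_submatrix_ge {ι : Type*} [Fintype ι]
    [DecidableEq ι] {A B : Matrix ι ι ℝ} (hA : A.IsHermitian) (hBA : ∀ i j, |B i j| ≤ A i j)
    {S : Finset ι} {v : ι → ℝ} {c : ℝ} (hv : B *ᵥ v = c • v) (hv0 : v ≠ 0)
    (hvS : Function.support v ⊆ S) :
    ∃ μ ∈ spectrum ℝ (A.submatrix ((↑) : S → ι) (↑) : Matrix S S ℝ), c ≤ μ := by
  have habs : Function.support |v| ⊆ S := fun x hx => hvS (by simpa using hx)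
  set w : S → ℝ := fun x => |v x.1|
  have hww : w ⬝ᵥ w = v ⬝ᵥ v :=
    calc w ⬝ᵥ w = |v| ⬝ᵥ |v| := (dotProduct_eq_subtype_of_support_subset |v| habs).symm
      _ = v ⬝ᵥ v := by simp [dotProduct]
  have hvv : 0 < v ⬝ᵥ v := by simpa using dotProduct_self_star_pos_iff.mpr hv0
  obtain ⟨μ, hμ, hle⟩ := (hA.submatrix Subtype.val).exists_mem_spectrum_dotProduct_mulVec_le
    (w := w) fun h => by rw [h, zero_dotProduct] at hww; linarith
  refine ⟨μ, hμ, le_of_mul_le_mul_right ?_ hvv⟩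
  calc c * (v ⬝ᵥ v) = v ⬝ᵥ (B *ᵥ v) := by rw [hv, dotProduct_smul, smul_eq_mul]
    _ ≤ |v| ⬝ᵥ (A *ᵥ |v|) := dotProduct_mulVec_le_abs hBA v
    _ = w ⬝ᵥ (A.submatrix (↑) (↑) *ᵥ w) := dotProduct_mulVec_eq_submatrix_of_support_subset _ habs
    _ ≤ μ * (v ⬝ᵥ v) := hww ▸ hle

theorem exists_huangMatrix_mulVec_eq_sqrt_smul_of_support_subset {n : ℕ} (hn : 1 ≤ n)
    {S : Finset (Fin n → Fin 2)} (hS : 2 ^ (n - 1) < S.card) :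
    ∃ v, v ≠ 0 ∧ huangMatrix ℝ n *ᵥ v = √n • v ∧ Function.support v ⊆ S := by
  have hs : √n ≠ 0 := (Real.sqrt_pos.mpr (by exact_mod_cast hn)).ne'
  have hdim := card_le_two_mul_finrank_eigenspace hs
    (by rw [huangMatrix_mul_self, Real.sq_sqrt n.cast_nonneg]) (trace_huangMatrix n)
  have hpow : 2 ^ n = 2 * 2 ^ (n - 1) := by rw [← pow_succ', Nat.sub_add_cancel hn]
  obtain ⟨v, hvB, hv0, hvS⟩ := Submodule.exists_mem_ne_zero_support_subset
    (Module.End.eigenspace (toLin' (huangMatrix ℝ n)) √n) S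
    (by rw [Fintype.card_fun, Fintype.card_fin, Fintype.card_fin] at hdim ⊢; omega)
  exact ⟨v, hv0, by simpa using Module.End.mem_eigenspace_iff.mp hvB, hvS⟩

theorem induced_subgraph_largest_eigenvalue (n : ℕ) (hn : 1 ≤ n)
    (S : Finset (Fin n → Fin 2)) (hS : S.card = 2 ^ (n - 1) + 1) :
    ∃ μ ∈ spectrum ℝ
        (Matrix.of fun x y : ↥S => if (hypercube n).Adj x.1 y.1 then (1 : ℝ) else 0),
      Real.sqrt n ≤ μ := by
  obtain ⟨v, hv0, hv, hvS⟩ := exists_huangMatrix_mulVec_eq_sqrt_smul_of_support_subset hn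
    (S := S) (by omega)
  exact ((hypercube n).isHermitian_adjMatrix ℝ).exists_mem_spectrum_submatrix_ge
    (fun x y => (abs_huangMatrix_apply n x y).le) hv hv0 hvS
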